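/- Let S be a finite nonabelian simple group, let n ≥ 2, and let T be a subgroup of Sym(Fin n). Let D = {f : Fin n → S | f is constant} be the diagonal subgroup of the direct power S^(×n) = (Fin n → S); note that D is invariant under the coordinate-permutation action of T. Then every normal subgroup of the wreath product S ≀ T = (Fin n → S) ⋊ T that is contained in the subgroup D ⋊ T = {(f, t) ∈ S ≀ T : f constant} is trivial. -/

import Mathlib

/-- The coordinate-permutation action of `Equiv.Perm α` on `α → S`:
`(σ • f) i = f (σ⁻¹ i)`. -/
def permMulAut (S : Type*) [Group S] (α : Type*) : Equiv.Perm α →* MulAut (α → S) where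
  toFun σ :=
    { toFun := fun f => f ∘ σ.symm
      invFun := fun f => f ∘ σ
      left_inv := fun f => by ext i; simp
      right_inv := fun f => by ext i; simp
      map_mul' := fun f g => rfl }
  map_one' := by ext f i; rfl
  map_mul' := fun σ τ => by ext f i; rfl

/-- The wreath product `S ≀ T` for `T` a subgroup of `Equiv.Perm α`, i.e. the semidirect
product `(α → S) ⋊ T` where `T` permutes coordinates. -/
def Wreath (S : Type*) [Group S] {α : Type*} (T : Subgroup (Equiv.Perm α)) : Type _ :=
  (α → S) ⋊[(permMulAut S α).comp T.subtype] T

instance (S : Type*) [Group S] {α : Type*} (T : Subgroup (Equiv.Perm α)) :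
    Group (Wreath S T) :=
  inferInstanceAs (Group ((α → S) ⋊[(permMulAut S α).comp T.subtype] T))

/-- The subgroup `L ≀ T` of `S ≀ T`: pairs `(f, t)` with all values of `f` in `L`. -/
def wreathSub {S : Type*} [Group S] {α : Type*} (L : Subgroup S)
    (T : Subgroup (Equiv.Perm α)) : Subgroup (Wreath S T) where
  carrier := {g : (α → S) ⋊[(permMulAut S α).comp T.subtype] T | ∀ i, g.left i ∈ L}
  one_mem' := fun i => by
    show (1 : (α → S) ⋊[(permMulAut S α).comp T.subtype] T).left i ∈ L
    simpa using one_mem L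
  mul_mem' := by
    intro a b ha hb i
    show (a * b).left i ∈ L
    exact mul_mem (ha i) (hb _)
  inv_mem' := by
    intro a ha i
    show (a⁻¹).left i ∈ L
    exact inv_mem (ha _)

/-- The subgroup `D ⋊ T` of the wreath product `S ≀ T`, where `D` is the diagonal
(constant-function) subgroup of the base group `α → S`. -/
def diagWreathSub (S : Type*) [Group S] {α : Type*} (T : Subgroup (Equiv.Perm α)) :
    Subgroup (Wreath S T) where
  carrier := {g : (α → S) ⋊[(permMulAut S α).comp T.subtype] T |
    ∃ s : S, g.left = fun _ => s}
  one_mem' := ⟨1, rfl⟩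
  mul_mem' := by
    rintro a b ⟨s, hs⟩ ⟨t, ht⟩
    refine ⟨s * t, ?_⟩
    show (a * b).left = fun _ => s * t
    exact funext fun i => congrArg₂ (· * ·) (congrFun hs i) (congrFun ht _)
  inv_mem' := by
    rintro a ⟨s, hs⟩
    refine ⟨s⁻¹, ?_⟩
    show (a⁻¹).left = fun _ => s⁻¹
    exact funext fun i => congrArg (·⁻¹) (congrFun hs _)

/-!
The base group `B = S^α` is normal in `S ≀ T` and is its own centraliser: if `(f, t)` commutes
with every `inl g` and `t j ≠ j`, comparing both products at `t j` for `g` supported at `j`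
gives `g j = 1`, so `S` would be trivial. A normal subgroup `N ≤ D ⋊ T` meets `B` only in
constant functions `c`, and conjugating `c` by a function supported at one coordinate keeps it
constant only if `c` is central, so `N ∩ B = 1`. Then `N` centralises `B`, hence `N ≤ B`, and
`N = 1`.
-/

theorem IsSimpleGroup.center_eq_bot {S : Type*} [Group S] [IsSimpleGroup S]
    (hna : ∃ a b : S, a * b ≠ b * a) : Subgroup.center S = ⊥ := by
  refine (IsSimpleGroup.eq_bot_or_eq_top_of_normal _ inferInstance).resolve_right fun h => ?_
  obtain ⟨a, b, hab⟩ := hna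
  exact hab (Subgroup.mem_center_iff.mp (h ▸ Subgroup.mem_top b) a)

namespace Wreath

variable {S : Type*} [Group S] {α : Type*} {T : Subgroup (Equiv.Perm α)}

def inl : (α → S) →* Wreath S T := SemidirectProduct.inl

@[simp]
theorem left_inl (f : α → S) : (inl f : Wreath S T).left = f := rfl

@[simp]
theorem right_inl (f : α → S) : (inl f : Wreath S T).right = 1 := rfl

@[simp]
theorem left_mul (x y : Wreath S T) (i : α) :
    (x * y).left i = x.left i * y.left ((x.right : Equiv.Perm α)⁻¹ i) := rfl

variable (S T) in
def base : Subgroup (Wreath S T) :=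
  (SemidirectProduct.rightHom : (α → S) ⋊[(permMulAut S α).comp T.subtype] T →* T).ker

theorem base_normal : (base S T).Normal := MonoidHom.normal_ker _

theorem inl_mem_base (f : α → S) : inl f ∈ base S T :=
  SemidirectProduct.rightHom_inl f

theorem eq_inl_left_of_mem_base {x : Wreath S T} (hx : x ∈ base S T) : x = inl x.left :=
  SemidirectProduct.ext rfl hx

theorem right_eq_one_of_forall_commute_inl [Nontrivial S] {x : Wreath S T}
    (hx : ∀ f, Commute (inl f) x) : x.right = 1 := by
  classical
  obtain ⟨a, ha⟩ := exists_ne (1 : S)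
  refine Subtype.ext (Equiv.ext fun j => by_contra fun hj => ha ?_)
  rw [Subgroup.coe_one, Equiv.Perm.one_apply] at hj
  have hcomm := congrArg SemidirectProduct.left (hx (Pi.mulSingle j a))
  simpa [Pi.mulSingle_apply, hj] using congrFun hcomm ((x.right : Equiv.Perm α) j)

theorem eq_bot_of_disjoint_base [Nontrivial S] {N : Subgroup (Wreath S T)} (hN : N.Normal)
    (hdisj : Disjoint N (base S T)) : N = ⊥ := by
  refine eq_bot_iff.mpr fun x hx => hdisj.le_bot ⟨hx, ?_⟩
  exact right_eq_one_of_forall_commute_inl fun f => (Subgroup.commute_of_normal_of_disjoint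
    N _ hN base_normal hdisj x (inl f) hx (inl_mem_base f)).symm

theorem disjoint_base_of_le_diagWreathSub [Nontrivial α] (hZ : Subgroup.center S = ⊥)
    {N : Subgroup (Wreath S T)} (hN : N.Normal) (hle : N ≤ diagWreathSub S T) :
    Disjoint N (base S T) := by
  classical
  refine disjoint_iff_inf_le.mpr fun x ⟨hxN, hxB⟩ => ?_
  obtain ⟨c, hc⟩ := hle hxN
  have hx : x = inl fun _ => c := hc ▸ eq_inl_left_of_mem_base hxB
  suffices c ∈ Subgroup.center S by
    rw [hZ, Subgroup.mem_bot] at this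
    rw [Subgroup.mem_bot, hx, this]
    exact map_one inl
  refine Subgroup.mem_center_iff.mpr fun a => ?_
  obtain ⟨i, j, hij⟩ := exists_pair_ne α
  let f : α → S := Pi.mulSingle i a
  have hconj : inl f * x * (inl f)⁻¹ = inl (f * (fun _ => c) * f⁻¹) := by
    rw [hx, map_mul, map_mul, map_inv]
  obtain ⟨c', hc'⟩ := hle (hN.conj_mem x hxN (inl f))
  rw [hconj, left_inl] at hc'
  have hi := congrFun hc' i
  have hj := congrFun hc' j
  simp only [f, Pi.mul_apply, Pi.inv_apply, Pi.mulSingle_eq_same,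
    Pi.mulSingle_eq_of_ne hij.symm, one_mul, inv_one, mul_one] at hi hj
  exact mul_inv_eq_iff_eq_mul.mp (hi.trans hj.symm)

end Wreath

theorem normal_le_diagWreathSub_eq_bot_general {S : Type*} [Group S]
    [IsSimpleGroup S] (hna : ∃ a b : S, a * b ≠ b * a)
    (n : ℕ) (hn : 2 ≤ n) (T : Subgroup (Equiv.Perm (Fin n)))
    (N : Subgroup (Wreath S T)) (hN : N.Normal) (hle : N ≤ diagWreathSub S T) :
    N = ⊥ :=
  have : Nontrivial (Fin n) := Fin.nontrivial_iff_two_le.mpr hn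
  Wreath.eq_bot_of_disjoint_base hN
    (Wreath.disjoint_base_of_le_diagWreathSub (IsSimpleGroup.center_eq_bot hna) hN hle)

/-- FF for Type II (diagonal) triples: for `S` a finite nonabelian simple group and
`n ≥ 2`, every normal subgroup of `S ≀ T` contained in `D ⋊ T` (with `D` the diagonal
subgroup of `S^n`) is trivial. -/
theorem normal_le_diagWreathSub_eq_bot {S : Type*} [Group S] [Finite S]
    [IsSimpleGroup S] (hna : ∃ a b : S, a * b ≠ b * a)
    (n : ℕ) (hn : 2 ≤ n) (T : Subgroup (Equiv.Perm (Fin n)))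
    (N : Subgroup (Wreath S T)) (hN : N.Normal) (hle : N ≤ diagWreathSub S T) :
    N = ⊥ :=
  normal_le_diagWreathSub_eq_bot_general hna n hn T N hN hle
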